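/- arXiv:1701.03423 — 6 statements merged into one kernel-verified Lean document; each statement's English description precedes it below -/
import Mathlib

section
/- Let G be a finite group and let C₁, C₂ be subgroups of G. Let A₁ and A₂ be the Cayley adjacency matrices of Cay(G, C₁∖{id}) and Cay(G, C₂∖{id}) respectively (as G×G matrices over ℂ). Then A₁·A₂ = A₂·A₁ if and only if C₁·C₂ = C₂·C₁ as subsets of G (elementwise product of sets). -/
/-
Write `A_S = M_S - 1`, where `M_S` is the 0/1 matrix of the relation `g * h⁻¹ ∈ S`, i.e. of lying in
the same right coset of `S`; the `A`'s commute iff the `M`'s do. The `(g, h)` entry of `M_H * M_K`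
counts the points of `Hg ∩ Kh`. These cosets meet iff `g * h⁻¹ ∈ HK`, and then their intersection is
a right coset of `H ⊓ K`; so `M_H * M_K` is `|H ⊓ K|` times the indicator of `g * h⁻¹ ∈ HK`.
-/

open scoped Pointwise Classical

/-- The Cayley adjacency matrix of `Cay(G, S \ {id})`: entry `(g, h)` is `1` if
`g * h⁻¹ ∈ S` and `g ≠ h`, and `0` otherwise. -/
noncomputable def cayleyAdj {G : Type*} [Group G] (S : Subgroup G) : Matrix G G ℂ :=
  Matrix.of fun g h => if g * h⁻¹ ∈ S ∧ g ≠ h then (1 : ℂ) else 0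

open MulOpposite

namespace Subgroup

variable {G : Type*} [Group G]

theorem rightCoset_inter_rightCoset {H K : Subgroup G} {a b c : G}
    (ha : c ∈ op a • (H : Set G)) (hb : c ∈ op b • (K : Set G)) :
    op a • (H : Set G) ∩ op b • (K : Set G) = op c • ((H ⊓ K : Subgroup G) : Set G) := by
  rw [coe_inf, Set.smul_set_inter, (rightCoset_eq_iff H).2 ((mem_rightCoset_iff a).1 ha),
    (rightCoset_eq_iff K).2 ((mem_rightCoset_iff b).1 hb)]

theorem rightCoset_inter_rightCoset_nonempty_iff {H K : Subgroup G} {a b : G} :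
    (op a • (H : Set G) ∩ op b • (K : Set G)).Nonempty ↔ a * b⁻¹ ∈ (H : Set G) * K := by
  simp only [Set.Nonempty, Set.mem_inter_iff, mem_rightCoset_iff, Set.mem_mul, SetLike.mem_coe]
  constructor
  · rintro ⟨c, hca, hcb⟩
    exact ⟨a * c⁻¹, by simpa using H.inv_mem hca, c * b⁻¹, hcb, by group⟩
  · rintro ⟨x, hx, y, hy, hxy⟩
    obtain rfl : a = x * y * b := by rw [hxy]; group
    exact ⟨y * b, by simpa [mul_assoc] using H.inv_mem hx, by simpa using hy⟩

theorem natCard_rightCoset_inter_rightCoset {H K : Subgroup G} {a b : G} :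
    Nat.card ↥(op a • (H : Set G) ∩ op b • (K : Set G)) =
      if a * b⁻¹ ∈ (H : Set G) * K then Nat.card (H ⊓ K : Subgroup G) else 0 := by
  split_ifs with hab
  · obtain ⟨c, ha, hb⟩ := rightCoset_inter_rightCoset_nonempty_iff.2 hab
    rw [rightCoset_inter_rightCoset ha hb, Set.natCard_smul_set]
    rfl
  · rw [← rightCoset_inter_rightCoset_nonempty_iff, Set.not_nonempty_iff_eq_empty] at hab
    simp [hab]

end Subgroup

theorem commute_sub_one_iff {R : Type*} [Ring R] {a b : R} :
    Commute (a - 1) (b - 1) ↔ Commute a b := by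
  refine ⟨fun h => ?_, fun h => (h.sub_left (Commute.one_left _)).sub_right (Commute.one_right _)⟩
  simpa using (h.add_left (Commute.one_left _)).add_right (Commute.one_right _)

section RightCosetMatrix

variable {G : Type*} [Group G]

noncomputable def rightCosetMatrix (R : Type*) [Zero R] [One R] (H : Subgroup G) : Matrix G G R :=
  Matrix.of fun g h => if g * h⁻¹ ∈ H then 1 else 0

variable {R : Type*} [Fintype G]

theorem rightCosetMatrix_mul_apply [NonAssocSemiring R] (H K : Subgroup G) (g h : G) :
    (rightCosetMatrix R H * rightCosetMatrix R K) g h =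
      if g * h⁻¹ ∈ (H : Set G) * K then (Nat.card (H ⊓ K : Subgroup G) : R) else 0 := by
  have hmemH : ∀ k, g * k⁻¹ ∈ H ↔ k ∈ op g • (H : Set G) := fun k => by
    rw [mem_rightCoset_iff, SetLike.mem_coe, ← H.inv_mem_iff, mul_inv_rev, inv_inv]
  have hmemK : ∀ k, k * h⁻¹ ∈ K ↔ k ∈ op h • (K : Set G) := fun k => (mem_rightCoset_iff h).symm
  have hcard : (rightCosetMatrix R H * rightCosetMatrix R K) g h =
      Nat.card ↥(op g • (H : Set G) ∩ op h • (K : Set G)) := by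
    simp only [Matrix.mul_apply, rightCosetMatrix, Matrix.of_apply, boole_mul, hmemH, hmemK,
      ← ite_and, Finset.sum_boole, Nat.card_eq_fintype_card, Fintype.card_subtype,
      Set.mem_inter_iff]
  rw [hcard, Subgroup.natCard_rightCoset_inter_rightCoset]
  split_ifs <;> simp

theorem rightCosetMatrix_commute_iff [NonAssocSemiring R] [CharZero R] (H K : Subgroup G) :
    Commute (rightCosetMatrix R H) (rightCosetMatrix R K) ↔ (H : Set G) * K = K * H := by
  refine ⟨fun hcomm => ?_, fun hHK => ?_⟩
  · ext x
    have hx := congr_fun₂ hcomm.eq x 1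
    simp only [rightCosetMatrix_mul_apply, inv_one, mul_one, inf_comm K] at hx
    have hpos : (Nat.card (H ⊓ K : Subgroup G) : R) ≠ 0 := Nat.cast_ne_zero.2 Nat.card_pos.ne'
    split_ifs at hx <;> simp_all
  · ext g h
    simp only [rightCosetMatrix_mul_apply, hHK, inf_comm H]

end RightCosetMatrix

theorem cayleyAdj_eq_rightCosetMatrix_sub_one {G : Type*} [Group G] [Fintype G]
    (S : Subgroup G) : cayleyAdj S = rightCosetMatrix ℂ S - 1 := by
  ext g h
  by_cases hgh : g = h
  · simp [cayleyAdj, rightCosetMatrix, hgh]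
  · simp [cayleyAdj, rightCosetMatrix, hgh, Matrix.one_apply_ne hgh]

theorem cayley_commute_iff_subgroup_products_eq
    {G : Type*} [Group G] [Fintype G] (C₁ C₂ : Subgroup G) :
    cayleyAdj C₁ * cayleyAdj C₂ = cayleyAdj C₂ * cayleyAdj C₁ ↔
      (C₁ : Set G) * (C₂ : Set G) = (C₂ : Set G) * (C₁ : Set G) := by
  rw [cayleyAdj_eq_rightCosetMatrix_sub_one, cayleyAdj_eq_rightCosetMatrix_sub_one,
    ← rightCosetMatrix_commute_iff (R := ℂ)]
  exact commute_sub_one_iff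
end

section
/- Let n, k be positive natural numbers, let A₁, …, A_k be pairwise commuting n×n complex matrices, let γ₁, …, γ_k be positive real numbers, let θ be a real number, and let T be a natural number. For each i define H_i = (2/γ_i)·A_i + ((2 − γ_i)/γ_i)·I. Then (∏_{i=1}^k exp(i·θ·γ_i·H_i))^T = exp(i·θ·T·(2k − ∑_{i=1}^k γ_i)) · exp(2·i·θ·T·∑_{i=1}^k A_i), where exp denotes the matrix exponential and i is the imaginary unit. -/
/-! Each exponent `iθγᵢ Hᵢ = iθ (2 Aᵢ + (2 - γᵢ) I)` is `2iθ Aᵢ` shifted by a scalar, so the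
factors of the staggered step commute and their product, and hence its `T`-th power, is a single
exponential; the scalar shifts split off as the global phase. -/

namespace Matrix

variable {m 𝔸 : Type*} [Fintype m] [DecidableEq m]

section NormedRing

variable [NormedRing 𝔸] [NormedAlgebra ℚ 𝔸] [CompleteSpace 𝔸]

theorem list_prod_ofFn_exp_of_commute {k : ℕ} (f : Fin k → Matrix m m 𝔸)
    (h : ∀ i j, Commute (f i) (f j)) :
    (List.ofFn fun i => NormedSpace.exp (f i)).prod = NormedSpace.exp (∑ i, f i) := by
  induction k with
  | zero => simp
  | succ k ih =>
    rw [List.ofFn_succ, List.prod_cons, Fin.sum_univ_succ,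
      exp_add_of_commute _ _ (Commute.sum_right _ _ _ fun i _ => h 0 i.succ),
      ih (fun i => f i.succ) (fun i j => h i.succ j.succ)]

theorem exp_smul_one (c : 𝔸) :
    NormedSpace.exp (c • (1 : Matrix m m 𝔸)) = NormedSpace.exp c • 1 := by
  rw [smul_one_eq_diagonal, smul_one_eq_diagonal, exp_diagonal, Pi.exp_def]

end NormedRing

section NormedCommRing

variable [NormedCommRing 𝔸] [NormedAlgebra ℚ 𝔸] [CompleteSpace 𝔸]

theorem exp_add_smul_one (X : Matrix m m 𝔸) (c : 𝔸) :
    NormedSpace.exp (X + c • 1) = NormedSpace.exp c • NormedSpace.exp X := by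
  rw [exp_add_of_commute _ _ ((Commute.one_right X).smul_right c), exp_smul_one,
    mul_smul_comm, mul_one]

theorem list_prod_ofFn_exp_add_smul_one {k : ℕ} (B : Fin k → Matrix m m 𝔸)
    (hB : ∀ i j, Commute (B i) (B j)) (c : Fin k → 𝔸) :
    (List.ofFn fun i => NormedSpace.exp (B i + c i • 1)).prod =
      NormedSpace.exp (∑ i, c i) • NormedSpace.exp (∑ i, B i) := by
  have hcomm : ∀ i j, Commute (B i + c i • 1) (B j + c j • 1) := fun i j =>
    ((hB i j).add_right ((Commute.one_right _).smul_right _)).add_left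
      (((Commute.one_left _).smul_left _).add_right
        (((Commute.one_left _).smul_left _).smul_right _))
  rw [list_prod_ofFn_exp_of_commute _ hcomm, Finset.sum_add_distrib, ← Finset.sum_smul,
    exp_add_smul_one]

end NormedCommRing

end Matrix

theorem staggered_discretizes_continuous_walk_general
    (n k : ℕ)
    (A : Fin k → Matrix (Fin n) (Fin n) ℂ)
    (hcomm : ∀ i j, Commute (A i) (A j))
    (γ : Fin k → ℝ) (hγ : ∀ i, 0 < γ i)
    (θ : ℝ) (T : ℕ)
    (H : Fin k → Matrix (Fin n) (Fin n) ℂ)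
    (hH : ∀ i, H i = ((2 : ℂ) / (γ i : ℂ)) • A i
        + (((2 : ℂ) - (γ i : ℂ)) / (γ i : ℂ)) • (1 : Matrix (Fin n) (Fin n) ℂ)) :
    (List.ofFn fun i =>
        NormedSpace.exp ((Complex.I * (θ : ℂ) * (γ i : ℂ)) • H i)).prod ^ T =
      Complex.exp (Complex.I * (θ : ℂ) * (T : ℂ) * (2 * (k : ℂ) - ∑ i, (γ i : ℂ))) •
        NormedSpace.exp ((2 * Complex.I * (θ : ℂ) * (T : ℂ)) • ∑ i, A i) := by
  have hstep : ∀ i, (Complex.I * θ * γ i) • H i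
      = (2 * Complex.I * θ) • A i + (Complex.I * θ * (2 - γ i)) • (1 : Matrix _ _ ℂ) := by
    intro i
    have hγi : (γ i : ℂ) ≠ 0 := Complex.ofReal_ne_zero.mpr (hγ i).ne'
    rw [hH i, smul_add, smul_smul, smul_smul]
    congr 2 <;> field_simp
  simp_rw [hstep]
  rw [Matrix.list_prod_ofFn_exp_add_smul_one _ (fun i j => ((hcomm i j).smul_left _).smul_right _),
    smul_pow, ← Complex.exp_eq_exp_ℂ, ← Complex.exp_nat_mul, ← Matrix.exp_nsmul,
    ← Finset.smul_sum, ← Nat.cast_smul_eq_nsmul ℂ, smul_smul]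
  congr 2
  · simp_rw [mul_sub, Finset.sum_sub_distrib, Finset.sum_const, Finset.card_univ,
      Fintype.card_fin, ← Finset.mul_sum, nsmul_eq_mul]
    ring
  · rw [mul_comm]

theorem staggered_discretizes_continuous_walk
    (n k : ℕ) (hn : 0 < n) (hk : 0 < k)
    (A : Fin k → Matrix (Fin n) (Fin n) ℂ)
    (hcomm : ∀ i j, Commute (A i) (A j))
    (γ : Fin k → ℝ) (hγ : ∀ i, 0 < γ i)
    (θ : ℝ) (T : ℕ)
    (H : Fin k → Matrix (Fin n) (Fin n) ℂ)
    (hH : ∀ i, H i = ((2 : ℂ) / (γ i : ℂ)) • A i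
        + (((2 : ℂ) - (γ i : ℂ)) / (γ i : ℂ)) • (1 : Matrix (Fin n) (Fin n) ℂ)) :
    (List.ofFn fun i =>
        NormedSpace.exp ((Complex.I * (θ : ℂ) * (γ i : ℂ)) • H i)).prod ^ T =
      Complex.exp (Complex.I * (θ : ℂ) * (T : ℂ) * (2 * (k : ℂ) - ∑ i, (γ i : ℂ))) •
        NormedSpace.exp ((2 * Complex.I * (θ : ℂ) * (T : ℂ)) • ∑ i, A i) :=
  staggered_discretizes_continuous_walk_general n k A hcomm γ hγ θ T H hH
end

section
/- Let G be a finite abelian group, let k be a positive natural number, and let S₁, …, S_k be subgroups of G with γ_i = |S_i|. Suppose S₁ = {id, s} for an element s ∈ G with s ≠ id and s·s = id. Let T be a positive natural number, set θ₁ = π/(2T) and θ_i = π·γ_i/T for i ≥ 2, let A_i be the Cayley adjacency matrix of Cay(G, S_i∖{id}) over ℂ, let H_i = (2/γ_i)·A_i + ((2 − γ_i)/γ_i)·I, and define U = ∏_{i=1}^k exp(i·θ_i·H_i). Then there exists β ∈ ℂ with |β| = 1 such that U^{2T} = β·I; that is, the staggered quantum walk is periodic with period 2T up to a global phase. -/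
open scoped Classical

/-!
Each `H_i` is the reflection `2 P_i - 1` in the projection `P_i = cosetAverage S_i` onto functions
constant on the cosets of `S_i`, and these projections commute because `G` is abelian. For an
idempotent `P`, `exp (z • (2 P - 1)) = e^{-z} (1 - P) + e^{z} P`, a scalar as soon as
`e^{2z} = 1`. The angles make every `4T θ_i` a multiple of `2π`, so every factor of `U^{2T}` is
a unimodular scalar.
-/

open NormedSpace

section Exponential

variable {𝔸 : Type*} [NormedRing 𝔸] [NormedAlgebra ℂ 𝔸] [CompleteSpace 𝔸] {P : 𝔸}

theorem IsIdempotentElem.exp_smul (hP : IsIdempotentElem P) (c : ℂ) :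
    exp (c • P) = 1 + (Complex.exp c - 1) • P := by
  -- `P ^ n = P` for `n ≥ 1`, so only the term `n = 0` deviates from `(cⁿ / n!) • P`, by `1 - P`.
  have hterm : ∀ n : ℕ, (n.factorial⁻¹ : ℂ) • (c • P) ^ n
      = ((n.factorial⁻¹ : ℂ) * c ^ n) • P + if n = 0 then 1 - P else 0 := by
    rintro (_ | n)
    · simp
    · simp [smul_pow, hP.pow_succ_eq, smul_smul]
  have hscalar : HasSum (fun n : ℕ => (n.factorial⁻¹ : ℂ) * c ^ n) (Complex.exp c) := by
    simpa [Complex.exp_eq_exp_ℂ] using exp_series_hasSum_exp' (𝕂 := ℂ) c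
  have hsum := (hscalar.smul_const P).add (hasSum_ite_eq 0 (1 - P))
  simp only [← hterm] at hsum
  rw [← hsum.unique (exp_series_hasSum_exp' (c • P)), sub_smul, one_smul]
  abel

theorem IsIdempotentElem.exp_smul_two_mul_sub_one (hP : IsIdempotentElem P) {z : ℂ}
    (hz : Complex.exp (2 * z) = 1) : exp (z • (2 * P - 1)) = Complex.exp (-z) • 1 := by
  have hsplit : z • (2 * P - 1) = (2 * z) • P + (-z) • (1 : 𝔸) := by
    rw [two_mul, two_mul, smul_sub, smul_add, add_smul, neg_smul]
    abel
  have hcomm : Commute ((2 * z) • P) ((-z) • (1 : 𝔸)) :=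
    ((Commute.one_right P).smul_left _).smul_right _
  have hball : ∀ x : 𝔸, x ∈ Metric.eball 0 (expSeries ℂ 𝔸).radius := fun x =>
    (expSeries_radius_eq_top ℂ 𝔸).symm ▸ edist_lt_top _ _
  rw [hsplit, exp_add_of_commute_of_mem_ball hcomm (hball _) (hball _), hP.exp_smul,
    IsIdempotentElem.one.exp_smul, hz]
  simp [sub_smul]

end Exponential

theorem List.prod_pow_of_pairwise_commute {M : Type*} [Monoid M] :
    ∀ {l : List M}, l.Pairwise Commute → ∀ n : ℕ, l.prod ^ n = (l.map (· ^ n)).prod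
  | [], _, n => by simp
  | a :: l, hl, n => by
    rw [List.pairwise_cons] at hl
    rw [List.prod_cons, (Commute.list_prod_right l a hl.1).mul_pow,
      prod_pow_of_pairwise_commute hl.2, List.map_cons, List.prod_cons]

theorem List.prod_ofFn_pow_eq_smul_one {R A : Type*} [CommSemiring R] [Semiring A] [Algebra R A]
    {k n : ℕ} {f : Fin k → A} (hf : ∀ i j, Commute (f i) (f j)) {c : Fin k → R}
    (hc : ∀ i, f i ^ n = c i • 1) : (List.ofFn f).prod ^ n = (∏ i, c i) • 1 := by
  rw [prod_pow_of_pairwise_commute (pairwise_ofFn.2 fun i j _ => hf i j), map_ofFn]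
  simp only [Function.comp_def, hc, ← Algebra.algebraMap_eq_smul_one, ← prod_ofFn,
    map_list_prod, map_ofFn]

theorem Matrix.commute_of_mul_inv {G R : Type*} [CommGroup G] [Fintype G] [CommSemiring R]
    (f f' : G → R) :
    Commute (Matrix.of fun g h => f (g * h⁻¹)) (Matrix.of fun g h => f' (g * h⁻¹)) := by
  ext g h
  simp only [Matrix.mul_apply, Matrix.of_apply]
  refine Fintype.sum_equiv ((Equiv.inv G).trans (Equiv.mulLeft (g * h))) _ _ fun x => ?_
  simp only [Equiv.trans_apply, Equiv.inv_apply, Equiv.coe_mulLeft]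
  rw [mul_comm, mul_right_comm _ x⁻¹, mul_inv_cancel_right, _root_.mul_inv_rev, inv_inv,
    _root_.mul_inv_rev, mul_left_comm, mul_comm h⁻¹, mul_inv_cancel_left]

section CosetAverage

variable {G : Type*} [Group G] [Fintype G]

noncomputable def cosetAverage (S : Subgroup G) : Matrix G G ℂ :=
  Matrix.of fun g h => if g * h⁻¹ ∈ S then (Nat.card S : ℂ)⁻¹ else 0

noncomputable def staggeredHamiltonian (S : Subgroup G) : Matrix G G ℂ :=
  ((2 : ℂ) / Nat.card S) • cayleyAdj S + ((2 - Nat.card S : ℂ) / Nat.card S) • 1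

theorem card_filter_mul_inv_mem (S : Subgroup G) (g : G) :
    (Finset.univ.filter fun x => g * x⁻¹ ∈ S).card = Nat.card S := by
  rw [Nat.card_eq_fintype_card, Fintype.card_subtype]
  refine Finset.card_bij' (fun x _ => g * x⁻¹) (fun y _ => y⁻¹ * g) ?_ ?_ ?_ ?_ <;> simp

theorem isIdempotentElem_cosetAverage (S : Subgroup G) : IsIdempotentElem (cosetAverage S) := by
  have hc : (Nat.card S : ℂ) ≠ 0 := Nat.cast_ne_zero.2 Nat.card_pos.ne'
  ext g h
  have hmem : ∀ x, g * x⁻¹ ∈ S → (x * h⁻¹ ∈ S ↔ g * h⁻¹ ∈ S) := fun x hx => by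
    rw [← S.mul_mem_cancel_left hx, mul_assoc, inv_mul_cancel_left]
  have hterm : ∀ x, cosetAverage S g x * cosetAverage S x h
      = if g * x⁻¹ ∈ S then (Nat.card S : ℂ)⁻¹ * cosetAverage S g h else 0 := fun x => by
    by_cases hx : g * x⁻¹ ∈ S <;> simp [cosetAverage, hx, hmem x]
  rw [Matrix.mul_apply, Finset.sum_congr rfl fun x _ => hterm x, ← Finset.sum_filter,
    Finset.sum_const, card_filter_mul_inv_mem, nsmul_eq_mul, ← mul_assoc, mul_inv_cancel₀ hc,
    one_mul]

theorem cayleyAdj_eq_card_smul_cosetAverage_sub_one (S : Subgroup G) :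
    cayleyAdj S = (Nat.card S : ℂ) • cosetAverage S - 1 := by
  ext g h
  by_cases hgh : g = h <;> simp [cayleyAdj, cosetAverage, hgh]

theorem staggeredHamiltonian_eq (S : Subgroup G) :
    staggeredHamiltonian S = 2 * cosetAverage S - 1 := by
  have hc : (Nat.card S : ℂ) ≠ 0 := Nat.cast_ne_zero.2 Nat.card_pos.ne'
  rw [staggeredHamiltonian, cayleyAdj_eq_card_smul_cosetAverage_sub_one, smul_sub, smul_smul,
    div_mul_cancel₀ _ hc, sub_div, div_self hc, sub_smul, one_smul, two_mul, two_smul]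
  abel

theorem exp_smul_staggeredHamiltonian (S : Subgroup G) {z : ℂ} (hz : Complex.exp (2 * z) = 1) :
    exp (z • staggeredHamiltonian S) = Complex.exp (-z) • 1 :=
  letI : NormedRing (Matrix G G ℂ) := Matrix.linftyOpNormedRing
  letI : NormedAlgebra ℂ (Matrix G G ℂ) := Matrix.linftyOpNormedAlgebra
  staggeredHamiltonian_eq S ▸ (isIdempotentElem_cosetAverage S).exp_smul_two_mul_sub_one hz

end CosetAverage

theorem commute_staggeredHamiltonian {G : Type*} [CommGroup G] [Fintype G] (S S' : Subgroup G) :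
    Commute (staggeredHamiltonian S) (staggeredHamiltonian S') := by
  have hP : Commute (cosetAverage S) (cosetAverage S') :=
    Matrix.commute_of_mul_inv (fun x => if x ∈ S then (Nat.card S : ℂ)⁻¹ else 0)
      (fun x => if x ∈ S' then (Nat.card S' : ℂ)⁻¹ else 0)
  rw [staggeredHamiltonian_eq, staggeredHamiltonian_eq]
  refine .sub_left (.sub_right ?_ (.one_right _)) (.one_left _)
  exact (Commute.ofNat_left 2 _).mul_left ((Commute.ofNat_right _ 2).mul_right hP)

theorem staggered_cayley_periodicity_general
    {G : Type*} [CommGroup G] [Fintype G]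
    (k : ℕ) (hk : 0 < k) (S : Fin k → Subgroup G)
    (γ : Fin k → ℕ) (hγ : ∀ i, γ i = Nat.card (S i))
    (T : ℕ) (hT : 0 < T)
    (θ : Fin k → ℝ)
    (hθ0 : θ ⟨0, hk⟩ = Real.pi / (2 * T))
    (hθ : ∀ i : Fin k, i ≠ ⟨0, hk⟩ → θ i = Real.pi * (γ i : ℝ) / T)
    (A : Fin k → Matrix G G ℂ) (hA : ∀ i, A i = cayleyAdj (S i))
    (H : Fin k → Matrix G G ℂ)
    (hH : ∀ i, H i = ((2 : ℂ) / (γ i : ℂ)) • A i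
        + (((2 : ℂ) - (γ i : ℂ)) / (γ i : ℂ)) • (1 : Matrix G G ℂ))
    (U : Matrix G G ℂ)
    (hU : U = (List.ofFn fun i => NormedSpace.exp ((Complex.I * (θ i : ℂ)) • H i)).prod) :
    ∃ β : ℂ, ‖β‖ = 1 ∧ U ^ (2 * T) = β • (1 : Matrix G G ℂ) := by
  have hH' : ∀ i, H i = staggeredHamiltonian (S i) := fun i => by rw [hH, hA, hγ]; rfl
  have hphase : ∀ i, Complex.exp (2 * ((2 * T * θ i : ℝ) * Complex.I)) = 1 := fun i => by
    have hT0 : (T : ℂ) ≠ 0 := Nat.cast_ne_zero.2 hT.ne'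
    rw [Complex.exp_eq_one_iff]
    by_cases hi : i = ⟨0, hk⟩
    · exact ⟨1, by rw [hi, hθ0]; push_cast; field_simp⟩
    · exact ⟨2 * γ i, by rw [hθ i hi]; push_cast; field_simp⟩
  refine ⟨∏ i, Complex.exp (-((2 * T * θ i : ℝ) * Complex.I)), ?_, ?_⟩
  · rw [norm_prod]
    refine Finset.prod_eq_one fun i _ => ?_
    rw [← neg_mul, ← Complex.ofReal_neg, Complex.norm_exp_ofReal_mul_I]
  · rw [hU]
    refine List.prod_ofFn_pow_eq_smul_one (fun i j => ?_) fun i => ?_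
    · rw [hH', hH']
      exact (((commute_staggeredHamiltonian _ _).smul_left _).smul_right _).exp
    · rw [← Matrix.exp_nsmul, ← Nat.cast_smul_eq_nsmul ℂ, smul_smul, hH']
      convert exp_smul_staggeredHamiltonian (S i) (hphase i) using 3
      push_cast
      ring

theorem staggered_cayley_periodicity
    {G : Type*} [CommGroup G] [Fintype G]
    (k : ℕ) (hk : 0 < k) (S : Fin k → Subgroup G)
    (γ : Fin k → ℕ) (hγ : ∀ i, γ i = Nat.card (S i))
    (s : G) (hs : s ≠ 1) (hs2 : s * s = 1)
    (hS1 : (S ⟨0, hk⟩ : Set G) = {1, s})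
    (T : ℕ) (hT : 0 < T)
    (θ : Fin k → ℝ)
    (hθ0 : θ ⟨0, hk⟩ = Real.pi / (2 * T))
    (hθ : ∀ i : Fin k, i ≠ ⟨0, hk⟩ → θ i = Real.pi * (γ i : ℝ) / T)
    (A : Fin k → Matrix G G ℂ) (hA : ∀ i, A i = cayleyAdj (S i))
    (H : Fin k → Matrix G G ℂ)
    (hH : ∀ i, H i = ((2 : ℂ) / (γ i : ℂ)) • A i
        + (((2 : ℂ) - (γ i : ℂ)) / (γ i : ℂ)) • (1 : Matrix G G ℂ))
    (U : Matrix G G ℂ)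
    (hU : U = (List.ofFn fun i => NormedSpace.exp ((Complex.I * (θ i : ℂ)) • H i)).prod) :
    ∃ β : ℂ, ‖β‖ = 1 ∧ U ^ (2 * T) = β • (1 : Matrix G G ℂ) :=
  staggered_cayley_periodicity_general k hk S γ hγ T hT θ hθ0 hθ A hA H hH U hU
end

section
/- Let G be a finite group and let S, T be subgroups of G with S ∩ T = {id}. Let M, N be G×G complex matrices such that for all a, b ∈ G: M_{a,b} = 0 whenever a⁻¹·b ∉ S and |M_{a,b}| = 1/√|S| whenever a⁻¹·b ∈ S; and N_{a,b} = 0 whenever a⁻¹·b ∉ T and |N_{a,b}| = 1/√|T| whenever a⁻¹·b ∈ T. Then for all a, b ∈ G: (M·N)_{a,b} = 0 whenever a⁻¹·b ∉ S·T, and |(M·N)_{a,b}| = 1/(√|S|·√|T|) whenever a⁻¹·b ∈ S·T, where S·T = {s·t : s ∈ S, t ∈ T}. -/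
open scoped Pointwise

/-!
The entry `(M * N) a b = ∑ c, M a c * N c b` can only be nonzero when `a⁻¹ * c ∈ S` and
`c⁻¹ * b ∈ T`, which factors `a⁻¹ * b` as an element of `S * T`. Since `S ∩ T = {1}`, such a
factorization `a⁻¹ * b = s * t` is unique, so the sum has the single term `c = a * s`, whose
modulus is the product of the two flat moduli.
-/

namespace Matrix

variable {G R : Type*} [Group G] [Fintype G]

theorem mul_apply_eq_zero_of_notMem_mul [NonUnitalNonAssocSemiring R] {A B : Set G}
    {M N : Matrix G G R} (hM : ∀ a b : G, a⁻¹ * b ∉ A → M a b = 0)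
    (hN : ∀ a b : G, a⁻¹ * b ∉ B → N a b = 0) {a b : G} (hab : a⁻¹ * b ∉ A * B) :
    (M * N) a b = 0 := by
  rw [mul_apply]
  refine Finset.sum_eq_zero fun c _ ↦ ?_
  by_cases hA : a⁻¹ * c ∈ A
  · by_cases hB : c⁻¹ * b ∈ B
    · exact absurd ⟨a⁻¹ * c, hA, c⁻¹ * b, hB, by group⟩ hab
    · rw [hN c b hB, mul_zero]
  · rw [hM a c hA, zero_mul]

theorem mul_apply_eq_of_disjoint [NonUnitalNonAssocSemiring R] {S T : Subgroup G}
    (hST : Disjoint S T) {M N : Matrix G G R} (hM : ∀ a b : G, a⁻¹ * b ∉ S → M a b = 0)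
    (hN : ∀ a b : G, a⁻¹ * b ∉ T → N a b = 0) {a b s t : G} (hs : s ∈ S) (ht : t ∈ T)
    (hab : a⁻¹ * b = s * t) :
    (M * N) a b = M a (a * s) * N (a * s) b := by
  rw [mul_apply]
  refine Finset.sum_eq_single (a * s) (fun c _ hc ↦ ?_) (absurd (Finset.mem_univ _))
  by_cases hS : a⁻¹ * c ∈ S
  · by_cases hT : c⁻¹ * b ∈ T
    · have hfactor : a⁻¹ * c = s := by
        have := Subgroup.mul_injective_of_disjoint hST
          (a₁ := (⟨a⁻¹ * c, hS⟩, ⟨c⁻¹ * b, hT⟩)) (a₂ := (⟨s, hs⟩, ⟨t, ht⟩))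
          (by simp only [← hab]; group)
        exact congrArg (fun p : S × T ↦ (p.1 : G)) this
      exact absurd (by rw [← hfactor, mul_inv_cancel_left]) hc
    · rw [hN c b hT, mul_zero]
  · rw [hM a c hS, zero_mul]

end Matrix

theorem flat_supported_matrices_product
    {G : Type*} [Group G] [Fintype G] (S T : Subgroup G)
    (hST : (S : Set G) ∩ (T : Set G) = {1})
    (M N : Matrix G G ℂ)
    (hM0 : ∀ a b : G, a⁻¹ * b ∉ S → M a b = 0)
    (hM1 : ∀ a b : G, a⁻¹ * b ∈ S → ‖M a b‖ = 1 / Real.sqrt (Nat.card S))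
    (hN0 : ∀ a b : G, a⁻¹ * b ∉ T → N a b = 0)
    (hN1 : ∀ a b : G, a⁻¹ * b ∈ T → ‖N a b‖ = 1 / Real.sqrt (Nat.card T)) :
    ∀ a b : G,
      (a⁻¹ * b ∉ (S : Set G) * (T : Set G) → (M * N) a b = 0) ∧
      (a⁻¹ * b ∈ (S : Set G) * (T : Set G) →
        ‖(M * N) a b‖ = 1 / (Real.sqrt (Nat.card S) * Real.sqrt (Nat.card T))) := by
  have hdisj : Disjoint S T := by
    rw [disjoint_iff, ← SetLike.coe_set_eq, Subgroup.coe_inf, hST, Subgroup.coe_bot]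
  intro a b
  refine ⟨Matrix.mul_apply_eq_zero_of_notMem_mul hM0 hN0, ?_⟩
  rintro ⟨s, hs, t, ht, hst⟩
  have hS : a⁻¹ * (a * s) ∈ S := by rwa [inv_mul_cancel_left]
  have hT : (a * s)⁻¹ * b ∈ T := by
    rwa [mul_inv_rev, mul_assoc, ← hst, inv_mul_cancel_left]
  rw [Matrix.mul_apply_eq_of_disjoint hdisj hM0 hN0 hs ht hst.symm, norm_mul, hM1 _ _ hS,
    hN1 _ _ hT, div_mul_div_comm, one_mul]
end

section
/- Let n be a natural number with n ≥ 2, and let θ be a real number. Let J be the n×n all-ones complex matrix and define the Grover Hamiltonian H = (2/n)·J − I. Then every entry of the matrix exp(i·θ·H) (matrix exponential, i the imaginary unit) has absolute value 1/√n if and only if (sin θ)² = n/4. -/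
/-! Since `J * J = n • J`, the Hamiltonian `H` is an involution, so summing the exponential series
by parity gives `exp (iθH) = cos θ • 1 + (i sin θ) • H`. Its off-diagonal entries `i sin θ · 2/n`
have modulus `1/√n` exactly when `sin² θ = n/4`, and then the diagonal entries
`cos θ + i sin θ (2/n - 1)` have squared modulus `1 - (4/n)(1 - 1/n) sin² θ = 1/n` automatically. -/

open Complex

theorem exp_smul_of_sq_eq_one {A : Type*} [NormedRing A] [NormedAlgebra ℂ A] [CompleteSpace A]
    {x : A} (hx : x ^ 2 = 1) (z : ℂ) :
    NormedSpace.exp (z • x) = cosh z • (1 : A) + sinh z • x := by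
  refine (NormedSpace.exp_series_hasSum_exp' (𝕂 := ℂ) (z • x)).unique (HasSum.even_add_odd ?_ ?_)
  · convert (hasSum_cosh z).smul_const (1 : A) using 2 with k
    rw [smul_pow, pow_mul x, hx, one_pow, smul_smul, div_eq_inv_mul]
  · convert (hasSum_sinh z).smul_const x using 2 with k
    rw [smul_pow, pow_succ x, pow_mul x, hx, one_pow, one_mul, smul_smul, div_eq_inv_mul]

theorem exp_I_mul_smul_of_sq_eq_one {A : Type*} [NormedRing A] [NormedAlgebra ℂ A]
    [CompleteSpace A] {x : A} (hx : x ^ 2 = 1) (z : ℂ) :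
    NormedSpace.exp ((I * z) • x) = cos z • (1 : A) + (I * sin z) • x := by
  rw [mul_comm I, exp_smul_of_sq_eq_one hx, cosh_mul_I, sinh_mul_I, mul_comm I]

theorem sq_two_div_smul_sub_one_eq_one {K A : Type*} [Field K] [Ring A] [Algebra K A] {c : K}
    (hc : c ≠ 0) {J : A} (hJ : J * J = c • J) : ((2 / c) • J - 1) ^ 2 = 1 := by
  have : (2 / c) * (2 / c) * c = 2 / c + 2 / c := by field_simp; ring
  rw [sq, sub_mul, mul_sub, mul_sub, smul_mul_smul_comm, hJ, smul_smul, this, add_smul]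
  simp only [mul_one, one_mul]
  abel

theorem Matrix.mul_self_of_forall_eq_one {ι R : Type*} [Fintype ι] [Semiring R]
    {J : Matrix ι ι R} (hJ : ∀ a b, J a b = 1) : J * J = (Fintype.card ι : R) • J := by
  ext a b
  simp [Matrix.mul_apply, hJ]

section

-- `NormedSpace.exp` depends only on the topology, so any algebra norm on matrices will do.
attribute [local instance] Matrix.linftyOpNormedRing Matrix.linftyOpNormedAlgebra

theorem Matrix.exp_I_mul_smul_of_sq_eq_one {ι : Type*} [Fintype ι] [DecidableEq ι]
    {H : Matrix ι ι ℂ} (hH : H ^ 2 = 1) (z : ℂ) :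
    NormedSpace.exp ((I * z) • H) = cos z • (1 : Matrix ι ι ℂ) + (I * sin z) • H :=
  _root_.exp_I_mul_smul_of_sq_eq_one hH z

end

theorem norm_I_mul_sin_mul_two_div_eq_inv_sqrt_iff {n : ℕ} (hn : 0 < n) (θ : ℝ) :
    ‖I * sin θ * (2 / n)‖ = 1 / √n ↔ Real.sin θ ^ 2 = n / 4 := by
  have hn' : (0 : ℝ) < n := Nat.cast_pos.2 hn
  rw [norm_mul, norm_mul, norm_I, one_mul, ← ofReal_sin, norm_real, Real.norm_eq_abs,
    norm_div, Complex.norm_two, Complex.norm_natCast, ← sq_eq_sq₀ (by positivity) (by positivity),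
    mul_pow, sq_abs, div_pow, div_pow, one_pow, Real.sq_sqrt hn'.le]
  constructor <;> intro h <;> field_simp at h ⊢ <;> linarith

theorem norm_cos_add_I_mul_sin_mul_two_div_sub_one {n : ℕ} (hn : 0 < n) {θ : ℝ}
    (hθ : Real.sin θ ^ 2 = n / 4) : ‖cos θ + I * sin θ * (2 / n - 1)‖ = 1 / √n := by
  have hn' : (0 : ℝ) < n := Nat.cast_pos.2 hn
  have hcos : Real.cos θ ^ 2 = 1 - Real.sin θ ^ 2 := by linarith [Real.sin_sq_add_cos_sq θ]
  have hsq : Real.cos θ ^ 2 + (Real.sin θ * (2 / n - 1)) ^ 2 = 1 / n := by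
    rw [mul_pow, hcos, hθ]
    field_simp
    ring
  have hre : cos θ + I * sin θ * (2 / n - 1)
      = (Real.cos θ : ℂ) + (Real.sin θ * (2 / n - 1) : ℝ) * I := by
    push_cast
    ring
  rw [hre, norm_add_mul_I, hsq, one_div, Real.sqrt_inv, one_div]

theorem grover_exp_flat_iff
    (n : ℕ) (hn : 2 ≤ n) (θ : ℝ)
    (J : Matrix (Fin n) (Fin n) ℂ) (hJ : ∀ a b, J a b = 1)
    (H : Matrix (Fin n) (Fin n) ℂ)
    (hH : H = ((2 : ℂ) / (n : ℂ)) • J - 1) :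
    (∀ a b, ‖(NormedSpace.exp ((Complex.I * (θ : ℂ)) • H)) a b‖
        = 1 / Real.sqrt n) ↔ (Real.sin θ) ^ 2 = (n : ℝ) / 4 := by
  have hn0 : 0 < n := by omega
  have hH2 : H ^ 2 = 1 := by
    rw [hH]
    refine sq_two_div_smul_sub_one_eq_one (Nat.cast_ne_zero.2 hn0.ne') ?_
    simpa using Matrix.mul_self_of_forall_eq_one hJ
  have hentry : ∀ a b, NormedSpace.exp ((I * θ) • H) a b
      = cos θ * (1 : Matrix (Fin n) (Fin n) ℂ) a b
        + I * sin θ * (2 / n - (1 : Matrix (Fin n) (Fin n) ℂ) a b) := by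
    intro a b
    rw [Matrix.exp_I_mul_smul_of_sq_eq_one hH2]
    simp [hH, hJ]
  constructor
  · intro hflat
    have h01 := hflat ⟨0, by omega⟩ ⟨1, by omega⟩
    rw [hentry, Matrix.one_apply_ne (by simp [Fin.ext_iff])] at h01
    exact (norm_I_mul_sin_mul_two_div_eq_inv_sqrt_iff hn0 θ).1 (by simpa using h01)
  · intro hθ a b
    rw [hentry]
    rcases eq_or_ne a b with rfl | hab
    · simpa using norm_cos_add_I_mul_sin_mul_two_div_sub_one hn0 hθ
    · simpa [Matrix.one_apply_ne hab] using (norm_I_mul_sin_mul_two_div_eq_inv_sqrt_iff hn0 θ).2 hθ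
end

section
/- Let n be a natural number with n ≥ 5, let J be the n×n all-ones complex matrix and H = (2/n)·J − I. Then for every real number θ, it is not the case that every entry of exp(i·θ·H) has absolute value 1/√n. In other words, for cliques of size at least 5 no choice of rotation angle θ makes the staggered evolution exp(i·θ·H) flat, so instantaneous uniform mixing is impossible on a single cell of size larger than 4. -/
/-!
Since `H * H = 1`, the exponential series of `(I * θ) • H` splits into its even and odd parts,
giving `exp ((I * θ) • H) = cos θ • 1 + (I * sin θ) • H`. An off-diagonal entry therefore has
absolute value `|sin θ| * (2 / n) ≤ 2 / n`, which is smaller than `1 / √n` as soon as `n > 4`.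
-/

open NormedSpace

theorem exp_I_mul_smul_of_mul_self_eq_one {𝔸 : Type*} [Ring 𝔸] [Algebra ℂ 𝔸]
    [TopologicalSpace 𝔸] [IsTopologicalRing 𝔸] [ContinuousSMul ℂ 𝔸] [T2Space 𝔸]
    (u : 𝔸) (hu : u * u = 1) (θ : ℝ) :
    exp ((Complex.I * θ) • u) = Complex.cos θ • (1 : 𝔸) + (Complex.I * Complex.sin θ) • u := by
  rw [exp_eq_tsum ℂ]
  refine HasSum.tsum_eq (HasSum.even_add_odd ?_ ?_)
  · convert (Complex.hasSum_cos' (θ : ℂ)).smul_const (1 : 𝔸) using 2 with k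
    rw [smul_pow, pow_mul u, pow_two u, hu, one_pow, smul_smul, div_eq_inv_mul]
    ring_nf
  · convert ((Complex.hasSum_sin' (θ : ℂ)).mul_left Complex.I).smul_const u using 2 with k
    rw [smul_pow, pow_succ u, pow_mul u, pow_two u, hu, one_pow, one_mul, smul_smul,
      mul_div_cancel₀ _ Complex.I_ne_zero, div_eq_inv_mul]
    ring_nf

theorem two_div_smul_sub_one_mul_self {K A : Type*} [Field K] [Ring A] [Algebra K A]
    {c : K} (hc : c ≠ 0) {J : A} (hJ : J * J = c • J) :
    ((2 / c) • J - 1) * ((2 / c) • J - 1) = 1 := by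
  have hcoeff : 2 / c * (2 / c) * c = 2 / c + 2 / c := by
    field_simp
    ring
  rw [sub_mul, mul_sub, mul_sub, smul_mul_smul_comm, hJ, smul_smul, hcoeff, add_smul,
    mul_one, one_mul, one_mul]
  abel

theorem Matrix.mul_self_eq_card_smul_of_forall_eq_one {n : ℕ} {J : Matrix (Fin n) (Fin n) ℂ}
    (hJ : ∀ a b, J a b = 1) : J * J = (n : ℂ) • J := by
  ext a b
  simp [Matrix.mul_apply, hJ]

theorem le_four_of_mul_two_div_eq_one_div_sqrt {s n : ℝ} (hs : |s| ≤ 1) (hn : 0 < n)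
    (h : |s| * (2 / n) = 1 / Real.sqrt n) : n ≤ 4 := by
  have hsqrt_pos : 0 < Real.sqrt n := Real.sqrt_pos.mpr hn
  have hsqrt_sq : Real.sqrt n * Real.sqrt n = n := Real.mul_self_sqrt hn.le
  have hsqrt_eq : Real.sqrt n = 2 * |s| := by
    field_simp at h
    nlinarith
  nlinarith

theorem grover_exp_not_flat_of_five_le
    (n : ℕ) (hn : 5 ≤ n)
    (J : Matrix (Fin n) (Fin n) ℂ) (hJ : ∀ a b, J a b = 1)
    (H : Matrix (Fin n) (Fin n) ℂ)
    (hH : H = ((2 : ℂ) / (n : ℂ)) • J - 1) :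
    ∀ θ : ℝ, ¬ (∀ a b, ‖(NormedSpace.exp ((Complex.I * (θ : ℂ)) • H)) a b‖
        = 1 / Real.sqrt n) := by
  intro θ hflat
  have hn0 : (n : ℂ) ≠ 0 := Nat.cast_ne_zero.mpr (by omega)
  have hHH : H * H = 1 :=
    hH ▸ two_div_smul_sub_one_mul_self hn0 (Matrix.mul_self_eq_card_smul_of_forall_eq_one hJ)
  let a : Fin n := ⟨0, by omega⟩
  let b : Fin n := ⟨1, by omega⟩
  have hab : a ≠ b := by simp [a, b, Fin.ext_iff]
  have hentry := hflat a b
  rw [exp_I_mul_smul_of_mul_self_eq_one H hHH θ, hH] at hentry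
  simp only [Matrix.add_apply, Matrix.smul_apply, Matrix.sub_apply, Matrix.one_apply_ne hab, hJ,
    smul_eq_mul, mul_zero, mul_one, sub_zero, zero_add, norm_mul, Complex.norm_I, one_mul,
    norm_div, ← Complex.ofReal_sin, Complex.norm_real, Real.norm_eq_abs, Complex.norm_two,
    Complex.norm_natCast] at hentry
  have h4 := le_four_of_mul_two_div_eq_one_div_sqrt (Real.abs_sin_le_one θ)
    (by exact_mod_cast (by omega : 0 < n)) hentry
  have h5 : (5 : ℝ) ≤ n := by exact_mod_cast hn
  linarith
end
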